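/- arXiv:1703.00038 — 2 statements merged into one kernel-verified Lean document; each statement's English description precedes it below -/
import Mathlib

section
/- Let Q(x,y)=ax²+hxy+by² be an indefinite integer binary quadratic form representing zero, i.e. with discriminant D=h²−4ab a positive perfect square. Then for every sequence w:ℕ→{L,R}, Λ_Q(w) = 2·Λ(w). -/
/-!
Write `Aₙ = pathMat w n` and `tₙ` for its trace. `Aₙ` has nonnegative entries and determinant
one, so its spectral radius lies in `[tₙ / 2, tₙ]` and `Λ(w)` is the exponential growth rate
of `tₙ`; every entry of `Aₙ` is at most `(n + 1) tₙ`, whence `|Qₙ| ≤ C (n + 1)² tₙ²`.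

Since `D` is a nonzero square, `m Q = ℓ₁ ℓ₂` with `m ≠ 0` and nonzero integral linear forms
`ℓ₁, ℓ₂`. The values of a linear form on the two columns of `Aₙ` form the row vector `ℓ Aₙ`,
which evolves under `L` and `R` exactly as the columns do. If for both forms these two values
eventually have the same sign, they keep it, and from then on the column sums are bounded by a
constant times their absolute values, giving `tₙ² ≤ c |Qₙ|`. Otherwise, for one form the two
values never share a sign, so `|ℓ(col₁)| + |ℓ(col₂)|` strictly decreases until one value
vanishes, and this pins `w` down to a constant word; then `tₙ` grows linearly and
`tₙ² ≤ c (n + 1)² |Qₙ|`. Polynomial factors do not change exponential growth rates.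
-/

open Filter Matrix

noncomputable section

def Lm : Matrix (Fin 2) (Fin 2) ℤ := !![1, 1; 0, 1]

def Rm : Matrix (Fin 2) (Fin 2) ℤ := !![1, 0; 1, 1]

/-- `pathMat w n = w 0 * w 1 * ⋯ * w (n-1)`. -/
def pathMat (w : ℕ → Matrix (Fin 2) (Fin 2) ℤ) (n : ℕ) : Matrix (Fin 2) (Fin 2) ℤ :=
  ((List.range n).map w).prod

/-- The value of the form `a x² + h x y + b y²`. -/
def Qval (a h b x y : ℤ) : ℤ := a * x ^ 2 + h * x * y + b * y ^ 2

/-- `|Qₙ(w)| = max(|aₙ|, |bₙ|, |cₙ|)` where the values are taken at the n-th superbase. -/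
def Qnorm (a h b : ℤ) (w : ℕ → Matrix (Fin 2) (Fin 2) ℤ) (n : ℕ) : ℤ :=
  max |Qval a h b (pathMat w n 0 0) (pathMat w n 1 0)|
    (max |Qval a h b (pathMat w n 0 1) (pathMat w n 1 1)|
      |Qval a h b (pathMat w n 0 0 + pathMat w n 0 1) (pathMat w n 1 0 + pathMat w n 1 1)|)

/-- The Lyapunov exponent `Λ_Q(w)` of the values of `Q` along the path `w`. -/
def LyapQ (a h b : ℤ) (w : ℕ → Matrix (Fin 2) (Fin 2) ℤ) : ℝ :=
  limsup (fun n : ℕ => Real.log (Qnorm a h b w n : ℝ) / (n : ℝ)) atTop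

/-- The matrix Lyapunov exponent `Λ(w)`, via the spectral radius over ℂ. -/
def Lyap (w : ℕ → Matrix (Fin 2) (Fin 2) ℤ) : ℝ :=
  limsup (fun n : ℕ =>
    Real.log ((spectralRadius ℂ ((pathMat w n).map ((↑) : ℤ → ℂ))).toReal) / (n : ℝ)) atTop

open Topology

/-- `LyapQ a h b w` and `Lyap w` are, by definition, the growth rates of `Qnorm a h b w` and of
the spectral radius of `pathMat w`. -/
def growthRate (x : ℕ → ℝ) : ℝ := limsup (fun n : ℕ => Real.log (x n) / n) atTop

section GrowthRate

variable {x y : ℕ → ℝ}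

lemma tendsto_log_mul_pow_div_atTop (C : ℝ) (k : ℕ) :
    Tendsto (fun n : ℕ => Real.log (C * (n + 1) ^ k) / n) atTop (𝓝 0) := by
  rcases eq_or_ne C 0 with rfl | hC
  · simp
  have hlog : Tendsto (fun n : ℕ => Real.log (n + 1) / n) atTop (𝓝 0) := by
    have := (Real.tendsto_pow_log_div_mul_add_atTop 1 (-1) 1 one_ne_zero).comp
      (tendsto_atTop_add_const_right atTop 1 tendsto_natCast_atTop_atTop)
    refine this.congr fun n => ?_
    simp
  have hsum := (tendsto_const_nhds (x := Real.log C)).div_atTop tendsto_natCast_atTop_atTop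
    |>.add (hlog.const_mul (k : ℝ))
  rw [mul_zero, add_zero] at hsum
  refine hsum.congr fun n => ?_
  rw [Real.log_mul hC (by positivity), Real.log_pow]
  ring

lemma log_sub_log_le_log_of_le_mul {a b c : ℝ} (ha : 0 < a) (hb : 0 < b) (h : a ≤ c * b) :
    Real.log a - Real.log b ≤ Real.log c := by
  rw [← Real.log_div ha.ne' hb.ne']
  exact Real.log_le_log (div_pos ha hb) (div_le_of_le_mul₀ hb.le (by nlinarith) h)

lemma tendsto_log_div_sub_log_div {C₁ C₂ : ℝ} {k₁ k₂ : ℕ}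
    (hx : ∀ᶠ n in atTop, 0 < x n) (hy : ∀ᶠ n in atTop, 0 < y n)
    (hxy : ∀ᶠ n in atTop, x n ≤ C₁ * (n + 1) ^ k₁ * y n)
    (hyx : ∀ᶠ n in atTop, y n ≤ C₂ * (n + 1) ^ k₂ * x n) :
    Tendsto (fun n : ℕ => Real.log (x n) / n - Real.log (y n) / n) atTop (𝓝 0) := by
  refine tendsto_of_tendsto_of_tendsto_of_le_of_le'
    (by simpa only [neg_zero] using (tendsto_log_mul_pow_div_atTop C₂ k₂).neg)
    (tendsto_log_mul_pow_div_atTop C₁ k₁) ?_ ?_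
  · filter_upwards [hx, hy, hyx] with n hxn hyn h
    have := div_le_div_of_nonneg_right (log_sub_log_le_log_of_le_mul hyn hxn h) n.cast_nonneg
    rw [sub_div] at this
    linarith
  · filter_upwards [hx, hy, hxy] with n hxn hyn h
    rw [← sub_div]
    exact div_le_div_of_nonneg_right (log_sub_log_le_log_of_le_mul hxn hyn h) n.cast_nonneg

lemma eventually_log_div_mem_Icc {B : ℝ} (hx1 : ∀ᶠ n in atTop, 1 ≤ x n) (hxB : ∀ᶠ n in atTop, x n ≤ B ^ n) :
    ∀ᶠ n : ℕ in atTop, Real.log (x n) / n ∈ Set.Icc 0 (Real.log B) := by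
  filter_upwards [hx1, hxB, eventually_gt_atTop 0] with n h1 hB hn
  have hn' : (0 : ℝ) < n := by exact_mod_cast hn
  refine ⟨div_nonneg (Real.log_nonneg h1) hn'.le, ?_⟩
  rw [div_le_iff₀ hn', mul_comm, ← Real.log_pow]
  exact Real.log_le_log (by linarith) hB

lemma growthRate_eq_of_tendsto {B : ℝ} (hy1 : ∀ᶠ n in atTop, 1 ≤ y n)
    (hyB : ∀ᶠ n in atTop, y n ≤ B ^ n)
    (h : Tendsto (fun n : ℕ => Real.log (x n) / n - Real.log (y n) / n) atTop (𝓝 0)) :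
    growthRate x = growthRate y := by
  set g := fun n : ℕ => Real.log (y n) / n
  set d := fun n : ℕ => Real.log (x n) / n - Real.log (y n) / n
  have hbdd := eventually_log_div_mem_Icc hy1 hyB
  have hg_le : IsBoundedUnder (· ≤ ·) atTop g :=
    isBoundedUnder_of_eventually_le (hbdd.mono fun _ h => h.2)
  have hg_ge : IsBoundedUnder (· ≥ ·) atTop g :=
    isBoundedUnder_of_eventually_ge (hbdd.mono fun _ h => h.1)
  have hfx : (fun n : ℕ => Real.log (x n) / n) = g + d := by
    funext n; simp [g, d]
  unfold growthRate
  rw [hfx]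
  apply le_antisymm
  · simpa [h.limsup_eq] using limsup_add_le hg_ge hg_le h.isCoboundedUnder_le h.isBoundedUnder_le
  · simpa [h.liminf_eq] using le_limsup_add hg_le hg_ge.isCoboundedUnder_le h.isBoundedUnder_le
      h.isBoundedUnder_ge

lemma growthRate_pow {B : ℝ} (hx1 : ∀ᶠ n in atTop, 1 ≤ x n) (hxB : ∀ᶠ n in atTop, x n ≤ B ^ n)
    (k : ℕ) : growthRate (fun n => x n ^ k) = k * growthRate x := by
  have hbdd := eventually_log_div_mem_Icc hx1 hxB
  have hmono : Monotone fun r : ℝ => k * r := fun _ _ h => by dsimp only; gcongr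
  have := hmono.map_limsup_of_continuousAt (F := atTop) (fun n : ℕ => Real.log (x n) / n)
    (continuous_const_mul _).continuousAt
    (isBoundedUnder_of_eventually_le (hbdd.mono fun _ h => h.2))
    (isBoundedUnder_of_eventually_ge (hbdd.mono fun _ h => h.1)).isCoboundedUnder_le
  simp only [growthRate, Real.log_pow, mul_div_assoc]
  exact this.symm

end GrowthRate

lemma spectralRadius_toReal_mem_Icc {M : Matrix (Fin 2) (Fin 2) ℂ} {t : ℝ} (ht : 2 ≤ t)
    (htr : M.trace = t) (hdet : M.det = 1) :
    (spectralRadius ℂ M).toReal ∈ Set.Icc (t / 2) t := by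
  set s := Real.sqrt (t ^ 2 - 4)
  have hs : s ^ 2 = t ^ 2 - 4 := Real.sq_sqrt (by nlinarith)
  have hs0 : 0 ≤ s := Real.sqrt_nonneg _
  have hst : s ≤ t := by nlinarith
  set l := (t + s) / 2 with hl_def
  have hmem : ∀ μ : ℂ, μ ∈ spectrum ℂ M ↔ μ = l ∨ μ = t - l := by
    intro μ
    have hfac : μ ^ 2 - t * μ + 1 = (μ - l) * (μ - (t - l)) := by
      have : (s : ℂ) ^ 2 = t ^ 2 - 4 := by exact_mod_cast hs
      simp only [l]; push_cast; linear_combination (1 / 4 : ℂ) * this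
    rw [Matrix.mem_spectrum_iff_isRoot_charpoly, charpoly_fin_two, htr, hdet]
    simp [hfac, sub_eq_zero]
  have hl : 0 ≤ t - l ∧ t - l ≤ l := by constructor <;> linarith
  have hρ : spectralRadius ℂ M = ‖(l : ℂ)‖₊ := by
    refine le_antisymm (iSup₂_le fun μ hμ => ?_)
      (le_iSup₂ (f := fun μ _ => (‖μ‖₊ : ENNReal)) (l : ℂ) ((hmem _).2 (Or.inl rfl)))
    rw [ENNReal.coe_le_coe, ← NNReal.coe_le_coe, coe_nnnorm, coe_nnnorm]
    rcases (hmem μ).1 hμ with rfl | rfl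
    · rfl
    · rw [← Complex.ofReal_sub, Complex.norm_real, Complex.norm_real, Real.norm_of_nonneg hl.1,
        Real.norm_of_nonneg (by linarith)]
      exact hl.2
  rw [hρ, ENNReal.coe_toReal, coe_nnnorm, Complex.norm_real, Real.norm_of_nonneg (by linarith)]
  constructor <;> linarith

section PathMat

variable {w : ℕ → Matrix (Fin 2) (Fin 2) ℤ}

@[simp]
lemma pathMat_zero (w : ℕ → Matrix (Fin 2) (Fin 2) ℤ) : pathMat w 0 = 1 := rfl

lemma pathMat_succ (w : ℕ → Matrix (Fin 2) (Fin 2) ℤ) (n : ℕ) :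
    pathMat w (n + 1) = pathMat w n * w n := by
  simp [pathMat, List.range_succ]

lemma det_pathMat (hdet : ∀ n, (w n).det = 1) (n : ℕ) : (pathMat w n).det = 1 := by
  induction n with
  | zero => simp
  | succ n ih => rw [pathMat_succ, det_mul, ih, hdet, one_mul]

lemma pathMat_nonneg (hw : ∀ n i j, 0 ≤ w n i j) (n : ℕ) (i j : Fin 2) :
    0 ≤ pathMat w n i j := by
  induction n generalizing i j with
  | zero => fin_cases i <;> fin_cases j <;> simp
  | succ n ih =>
    rw [pathMat_succ, mul_apply]
    exact Finset.sum_nonneg fun k _ => mul_nonneg (ih i k) (hw n k j)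

lemma pathMat_le_two_pow (hw : ∀ n i j, 0 ≤ w n i j ∧ w n i j ≤ 1) (n : ℕ) (i j : Fin 2) :
    pathMat w n i j ≤ 2 ^ n := by
  induction n generalizing i j with
  | zero => fin_cases i <;> fin_cases j <;> simp
  | succ n ih =>
    have hnn := pathMat_nonneg (fun n i j => (hw n i j).1) n
    rw [pathMat_succ, mul_apply, Fin.sum_univ_two, pow_succ]
    nlinarith [ih i 0, ih i 1, hnn i 0, hnn i 1, hw n 0 j, hw n 1 j]

lemma one_le_diag_of_det_eq_one {A : Matrix (Fin 2) (Fin 2) ℤ} (hA : ∀ i j, 0 ≤ A i j)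
    (hdet : A.det = 1) : 1 ≤ A 0 0 ∧ 1 ≤ A 1 1 := by
  rw [det_fin_two] at hdet
  have : 0 < A 0 0 * A 1 1 := by nlinarith [mul_nonneg (hA 0 1) (hA 1 0)]
  rcases pos_and_pos_or_neg_and_neg_of_mul_pos this with h | h
  · omega
  · exact absurd h.1 (hA 0 0).not_gt

end PathMat

lemma vecMul_Lm (v : Fin 2 → ℤ) : v ᵥ* Lm = ![v 0, v 0 + v 1] := by
  ext j; fin_cases j <;> simp [Lm, vecMul, dotProduct, Fin.sum_univ_two]

lemma vecMul_Rm (v : Fin 2 → ℤ) : v ᵥ* Rm = ![v 0 + v 1, v 1] := by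
  ext j; fin_cases j <;> simp [Rm, vecMul, dotProduct, Fin.sum_univ_two]

section Orbit

variable {w : ℕ → Matrix (Fin 2) (Fin 2) ℤ} {u v : ℕ → Fin 2 → ℤ}

lemma orbit_succ_of_Lm (hu : ∀ n, u (n + 1) = u n ᵥ* w n) {n : ℕ} (h : w n = Lm) :
    u (n + 1) 0 = u n 0 ∧ u (n + 1) 1 = u n 0 + u n 1 := by
  simp [hu, h, vecMul_Lm]

lemma orbit_succ_of_Rm (hu : ∀ n, u (n + 1) = u n ᵥ* w n) {n : ℕ} (h : w n = Rm) :
    u (n + 1) 0 = u n 0 + u n 1 ∧ u (n + 1) 1 = u n 1 := by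
  simp [hu, h, vecMul_Rm]

lemma orbit_mul_pos (hw : ∀ n, w n = Lm ∨ w n = Rm) (hu : ∀ n, u (n + 1) = u n ᵥ* w n)
    {n₀ : ℕ} (hpos : 0 < u n₀ 0 * u n₀ 1) {n : ℕ} (hn : n₀ ≤ n) : 0 < u n 0 * u n 1 := by
  induction n, hn using Nat.le_induction with
  | base => exact hpos
  | succ n _ ih =>
    rcases hw n with h | h
    · obtain ⟨h0, h1⟩ := orbit_succ_of_Lm hu h
      rw [h0, h1]; nlinarith [sq_nonneg (u n 0)]
    · obtain ⟨h0, h1⟩ := orbit_succ_of_Rm hu h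
      rw [h0, h1]; nlinarith [sq_nonneg (u n 1)]

lemma abs_add_of_mul_pos {α : Type*} [Ring α] [LinearOrder α] [IsStrictOrderedRing α] {a b : α}
    (h : 0 < a * b) : |a + b| = |a| + |b| := by
  rcases pos_and_pos_or_neg_and_neg_of_mul_pos h with ⟨ha, hb⟩ | ⟨ha, hb⟩
  · exact abs_add_eq_add_abs_iff a b |>.2 (Or.inl ⟨ha.le, hb.le⟩)
  · exact abs_add_eq_add_abs_iff a b |>.2 (Or.inr ⟨ha.le, hb.le⟩)

lemma orbit_le_mul_abs (hw : ∀ n, w n = Lm ∨ w n = Rm) (hu : ∀ n, u (n + 1) = u n ᵥ* w n)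
    (hv : ∀ n, v (n + 1) = v n ᵥ* w n) {n₀ : ℕ} (hpos : 0 < u n₀ 0 * u n₀ 1) {K : ℤ}
    (hle : ∀ j, v n₀ j ≤ K * |u n₀ j|) {n : ℕ} (hn : n₀ ≤ n) (j : Fin 2) :
    v n j ≤ K * |u n j| := by
  induction n, hn using Nat.le_induction generalizing j with
  | base => exact hle j
  | succ n hn ih =>
    have hadd := abs_add_of_mul_pos (orbit_mul_pos hw hu hpos hn)
    rcases hw n with h | h
    · obtain ⟨hu0, hu1⟩ := orbit_succ_of_Lm hu h
      obtain ⟨hv0, hv1⟩ := orbit_succ_of_Lm hv h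
      fin_cases j
      · simpa [hu0, hv0] using ih 0
      · simp only [Fin.mk_one, hu1, hv1, hadd, mul_add]; linarith [ih 0, ih 1]
    · obtain ⟨hu0, hu1⟩ := orbit_succ_of_Rm hu h
      obtain ⟨hv0, hv1⟩ := orbit_succ_of_Rm hv h
      fin_cases j
      · simp only [Fin.zero_eta, hu0, hv0, hadd, mul_add]; linarith [ih 0, ih 1]
      · simpa [hu1, hv1] using ih 1

lemma abs_add_lt_abs_of_mul_nonpos {a b : ℤ} (ha : a ≠ 0) (hab : a * b ≤ 0)
    (h : a * (a + b) ≤ 0) : |a + b| < |b| := by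
  rcases ha.lt_or_gt with ha | ha
  · have hb : 0 ≤ b := by nlinarith
    have hab' : 0 ≤ a + b := by nlinarith
    rw [abs_of_nonneg hb, abs_of_nonneg hab']; linarith
  · have hb : b ≤ 0 := by nlinarith
    have hab' : a + b ≤ 0 := by nlinarith
    rw [abs_of_nonpos hb, abs_of_nonpos hab']; linarith

lemma orbit_abs_add_lt (hw : ∀ n, w n = Lm ∨ w n = Rm) (hu : ∀ n, u (n + 1) = u n ᵥ* w n)
    {n : ℕ} (h0 : u n 0 ≠ 0) (h1 : u n 1 ≠ 0) (hn : u n 0 * u n 1 ≤ 0)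
    (hn' : u (n + 1) 0 * u (n + 1) 1 ≤ 0) :
    |u (n + 1) 0| + |u (n + 1) 1| < |u n 0| + |u n 1| := by
  rcases hw n with h | h
  · obtain ⟨e0, e1⟩ := orbit_succ_of_Lm hu h
    rw [e0, e1] at hn' ⊢
    linarith [abs_add_lt_abs_of_mul_nonpos h0 hn hn']
  · obtain ⟨e0, e1⟩ := orbit_succ_of_Rm hu h
    rw [e0, e1, add_comm (u n 0)] at hn' ⊢
    linarith [abs_add_lt_abs_of_mul_nonpos (b := u n 0) h1
      (by linarith [mul_comm (u n 0) (u n 1)]) (by linarith [mul_comm (u n 1 + u n 0) (u n 1)])]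

lemma exists_orbit_eq_zero (hw : ∀ n, w n = Lm ∨ w n = Rm) (hu : ∀ n, u (n + 1) = u n ᵥ* w n)
    (hnp : ∀ n, u n 0 * u n 1 ≤ 0) : ∃ n, u n 0 = 0 ∨ u n 1 = 0 := by
  by_contra! hne
  obtain ⟨n, hn⟩ := WellFounded.not_rel_apply_succ (r := (· < ·))
    fun n => (|u n 0| + |u n 1|).toNat
  have := orbit_abs_add_lt hw hu (hne n).1 (hne n).2 (hnp n) (hnp (n + 1))
  have := abs_nonneg (u (n + 1) 0)
  have := abs_nonneg (u (n + 1) 1)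
  omega

lemma eq_Lm_of_orbit_eq_zero (hw : ∀ n, w n = Lm ∨ w n = Rm) (hu : ∀ n, u (n + 1) = u n ᵥ* w n)
    {n : ℕ} (hne : u n ≠ 0) (hz : u n 0 = 0) (hnp : u (n + 1) 0 * u (n + 1) 1 ≤ 0) :
    w n = Lm := by
  refine (hw n).resolve_right fun h => hne ?_
  obtain ⟨e0, e1⟩ := orbit_succ_of_Rm hu h
  rw [e0, e1, hz, zero_add] at hnp
  have h1 : u n 1 = 0 := mul_self_eq_zero.mp (le_antisymm hnp (mul_self_nonneg _))
  ext j; fin_cases j <;> simp [hz, h1]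

lemma eq_Rm_of_orbit_eq_zero (hw : ∀ n, w n = Lm ∨ w n = Rm) (hu : ∀ n, u (n + 1) = u n ᵥ* w n)
    {n : ℕ} (hne : u n ≠ 0) (hz : u n 1 = 0) (hnp : u (n + 1) 0 * u (n + 1) 1 ≤ 0) :
    w n = Rm := by
  refine (hw n).resolve_left fun h => hne ?_
  obtain ⟨e0, e1⟩ := orbit_succ_of_Lm hu h
  rw [e0, e1, hz, add_zero] at hnp
  have h0 : u n 0 = 0 := mul_self_eq_zero.mp (le_antisymm hnp (mul_self_nonneg _))
  ext j; fin_cases j <;> simp [hz, h0]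

lemma eventually_const_of_orbit_mul_nonpos (hw : ∀ n, w n = Lm ∨ w n = Rm)
    (hu : ∀ n, u (n + 1) = u n ᵥ* w n) (hnp : ∀ n, u n 0 * u n 1 ≤ 0) (hne : ∀ n, u n ≠ 0) :
    ∃ n₁, ∀ n ≥ n₁, w n = w n₁ := by
  obtain ⟨n₁, hz | hz⟩ := exists_orbit_eq_zero hw hu hnp
  · have hL : ∀ n ≥ n₁, u n 0 = 0 ∧ w n = Lm := fun n hn => by
      induction n, hn using Nat.le_induction with
      | base => exact ⟨hz, eq_Lm_of_orbit_eq_zero hw hu (hne n₁) hz (hnp _)⟩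
      | succ n _ ih =>
        have hz' := (orbit_succ_of_Lm hu ih.2).1.trans ih.1
        exact ⟨hz', eq_Lm_of_orbit_eq_zero hw hu (hne _) hz' (hnp _)⟩
    exact ⟨n₁, fun n hn => (hL n hn).2.trans (hL n₁ le_rfl).2.symm⟩
  · have hR : ∀ n ≥ n₁, u n 1 = 0 ∧ w n = Rm := fun n hn => by
      induction n, hn using Nat.le_induction with
      | base => exact ⟨hz, eq_Rm_of_orbit_eq_zero hw hu (hne n₁) hz (hnp _)⟩
      | succ n _ ih =>
        have hz' := (orbit_succ_of_Rm hu ih.2).2.trans ih.1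
        exact ⟨hz', eq_Rm_of_orbit_eq_zero hw hu (hne _) hz' (hnp _)⟩
    exact ⟨n₁, fun n hn => (hR n hn).2.trans (hR n₁ le_rfl).2.symm⟩

lemma orbit_sum_le_of_const (hw : ∀ n, w n = Lm ∨ w n = Rm) (hu : ∀ n, u (n + 1) = u n ᵥ* w n)
    {n₁ : ℕ} (hconst : ∀ n ≥ n₁, w n = w n₁) (h0 : 0 ≤ u n₁ 0) (h1 : 0 ≤ u n₁ 1) (k : ℕ) :
    u (n₁ + k) 0 + u (n₁ + k) 1 ≤ (k + 1) * (u n₁ 0 + u n₁ 1) := by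
  rcases hw n₁ with h | h
  · have : u (n₁ + k) 0 = u n₁ 0 ∧ u (n₁ + k) 1 = u n₁ 1 + k * u n₁ 0 := by
      induction k with
      | zero => simp
      | succ k ih =>
        obtain ⟨e0, e1⟩ := orbit_succ_of_Lm hu ((hconst (n₁ + k) (Nat.le_add_right n₁ k)).trans h)
        rw [← add_assoc, e0, e1, ih.1, ih.2]
        push_cast; constructor <;> ring
    rw [this.1, this.2]; nlinarith [k.cast_nonneg (α := ℤ)]
  · have : u (n₁ + k) 0 = u n₁ 0 + k * u n₁ 1 ∧ u (n₁ + k) 1 = u n₁ 1 := by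
      induction k with
      | zero => simp
      | succ k ih =>
        obtain ⟨e0, e1⟩ := orbit_succ_of_Rm hu ((hconst (n₁ + k) (Nat.le_add_right n₁ k)).trans h)
        rw [← add_assoc, e0, e1, ih.1, ih.2]
        push_cast; constructor <;> ring
    rw [this.1, this.2]; nlinarith [k.cast_nonneg (α := ℤ)]

end Orbit

section LRPath

variable {w : ℕ → Matrix (Fin 2) (Fin 2) ℤ}

lemma pathMat_succ_row (w : ℕ → Matrix (Fin 2) (Fin 2) ℤ) (i : Fin 2) (n : ℕ) :
    pathMat w (n + 1) i = pathMat w n i ᵥ* w n := by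
  ext j; simp [pathMat_succ, mul_apply, vecMul, dotProduct]

lemma vecMul_pathMat_succ (w : ℕ → Matrix (Fin 2) (Fin 2) ℤ) (ℓ : Fin 2 → ℤ) (n : ℕ) :
    ℓ ᵥ* pathMat w (n + 1) = ℓ ᵥ* pathMat w n ᵥ* w n := by
  rw [pathMat_succ, vecMul_vecMul]

lemma det_pathMat_of_LR (hw : ∀ n, w n = Lm ∨ w n = Rm) (n : ℕ) : (pathMat w n).det = 1 :=
  det_pathMat (fun n => by rcases hw n with h | h <;> simp [h, Lm, Rm]) n

lemma pathMat_nonneg_of_LR (hw : ∀ n, w n = Lm ∨ w n = Rm) (n : ℕ) (i j : Fin 2) :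
    0 ≤ pathMat w n i j :=
  pathMat_nonneg (fun n i j => by
    rcases hw n with h | h <;> fin_cases i <;> fin_cases j <;> simp [h, Lm, Rm]) n i j

lemma trace_pathMat_le_two_pow (hw : ∀ n, w n = Lm ∨ w n = Rm) (n : ℕ) :
    (pathMat w n).trace ≤ 2 ^ (n + 1) := by
  have hle := pathMat_le_two_pow (w := w) (fun n i j => by
    rcases hw n with h | h <;> fin_cases i <;> fin_cases j <;> simp [h, Lm, Rm]) n
  rw [trace_fin_two, pow_succ]
  linarith [hle 0 0, hle 1 1]

lemma two_le_trace_pathMat (hw : ∀ n, w n = Lm ∨ w n = Rm) (n : ℕ) :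
    2 ≤ (pathMat w n).trace := by
  have := one_le_diag_of_det_eq_one (pathMat_nonneg_of_LR hw n) (det_pathMat_of_LR hw n)
  rw [trace_fin_two]
  linarith

lemma pathMat_offDiag_le (hw : ∀ n, w n = Lm ∨ w n = Rm) (n : ℕ) :
    pathMat w n 0 1 + pathMat w n 1 0 ≤ n * (pathMat w n).trace := by
  induction n with
  | zero => simp
  | succ n ih =>
    have hnn := pathMat_nonneg_of_LR hw n
    have hn : (0 : ℤ) ≤ n := n.cast_nonneg
    simp only [trace_fin_two] at ih ⊢
    push_cast
    rcases hw n with h | h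
    · obtain ⟨p, q⟩ := orbit_succ_of_Lm (u := fun n => pathMat w n 0) (pathMat_succ_row w 0) h
      obtain ⟨r, s⟩ := orbit_succ_of_Lm (u := fun n => pathMat w n 1) (pathMat_succ_row w 1) h
      rw [p, q, r, s]
      nlinarith [hnn 0 0, hnn 0 1, hnn 1 0, hnn 1 1]
    · obtain ⟨p, q⟩ := orbit_succ_of_Rm (u := fun n => pathMat w n 0) (pathMat_succ_row w 0) h
      obtain ⟨r, s⟩ := orbit_succ_of_Rm (u := fun n => pathMat w n 1) (pathMat_succ_row w 1) h
      rw [p, q, r, s]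
      nlinarith [hnn 0 0, hnn 0 1, hnn 1 0, hnn 1 1]

end LRPath

section Form

variable {a h b : ℤ}

lemma Qval_discriminant_identity (a h b p q r s : ℤ) :
    (Qval a h b (p + q) (r + s) - Qval a h b p r - Qval a h b q s) ^ 2
      - 4 * Qval a h b p r * Qval a h b q s = (h ^ 2 - 4 * a * b) * (p * s - q * r) ^ 2 := by
  unfold Qval; ring

lemma abs_Qval_le {x y M : ℤ} (hx : |x| ≤ M) (hy : |y| ≤ M) :
    |Qval a h b x y| ≤ (|a| + |h| + |b|) * M ^ 2 := by
  have hM : 0 ≤ M := (abs_nonneg x).trans hx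
  calc |Qval a h b x y| ≤ |a| * |x| ^ 2 + |h| * |x| * |y| + |b| * |y| ^ 2 := by
        have := abs_add_three (a * x ^ 2) (h * x * y) (b * y ^ 2)
        rwa [abs_mul, abs_mul, abs_mul, abs_mul, abs_pow, abs_pow] at this
    _ ≤ |a| * M ^ 2 + |h| * M * M + |b| * M ^ 2 := by gcongr
    _ = (|a| + |h| + |b|) * M ^ 2 := by ring

lemma exists_mul_Qval_eq_mul (hD : 0 < h ^ 2 - 4 * a * b) (hsq : IsSquare (h ^ 2 - 4 * a * b)) :
    ∃ m : ℤ, ∃ ℓ₁ ℓ₂ : Fin 2 → ℤ, ℓ₁ ≠ 0 ∧ ℓ₂ ≠ 0 ∧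
      ∀ v : Fin 2 → ℤ, m * Qval a h b (v 0) (v 1) = (ℓ₁ ⬝ᵥ v) * (ℓ₂ ⬝ᵥ v) := by
  obtain ⟨d, hd⟩ := hsq
  rcases eq_or_ne a 0 with rfl | ha
  · have hh : h ≠ 0 := by rintro rfl; simp at hD
    refine ⟨1, ![0, 1], ![h, b], by simp, by simp [hh], fun v => ?_⟩
    simp only [Qval, dotProduct, Fin.sum_univ_two, cons_val_zero, cons_val_one, cons_val_fin_one]
    ring
  · refine ⟨4 * a, ![2 * a, h + d], ![2 * a, h - d], by simp [ha], by simp [ha], fun v => ?_⟩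
    simp only [Qval, dotProduct, Fin.sum_univ_two, cons_val_zero, cons_val_one, cons_val_fin_one]
    linear_combination (-(v 1) ^ 2) * hd

variable {w : ℕ → Matrix (Fin 2) (Fin 2) ℤ}

lemma one_le_Qnorm (hD : h ^ 2 - 4 * a * b ≠ 0) (hw : ∀ n, w n = Lm ∨ w n = Rm) (n : ℕ) :
    1 ≤ Qnorm a h b w n := by
  by_contra! hlt
  simp only [Qnorm, max_lt_iff, Int.abs_lt_one_iff] at hlt
  have := Qval_discriminant_identity a h b
    (pathMat w n 0 0) (pathMat w n 0 1) (pathMat w n 1 0) (pathMat w n 1 1)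
  rw [hlt.1, hlt.2.1, hlt.2.2, ← det_fin_two, det_pathMat_of_LR hw n] at this
  exact hD (by simpa using this.symm)

lemma abs_Qval_col_le_Qnorm (w : ℕ → Matrix (Fin 2) (Fin 2) ℤ) (n : ℕ) (j : Fin 2) :
    |Qval a h b (pathMat w n 0 j) (pathMat w n 1 j)| ≤ Qnorm a h b w n := by
  fin_cases j
  · exact le_max_left _ _
  · exact (le_max_left _ _).trans (le_max_right _ _)

lemma Qnorm_le (hw : ∀ n, w n = Lm ∨ w n = Rm) (n : ℕ) :
    Qnorm a h b w n ≤ (|a| + |h| + |b|) * ((n + 1) * (pathMat w n).trace) ^ 2 := by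
  have hnn := pathMat_nonneg_of_LR hw n
  have hoff := pathMat_offDiag_le hw n
  have htr := trace_fin_two (pathMat w n)
  have hn : (0 : ℤ) ≤ n := n.cast_nonneg
  have hbound : ∀ x, 0 ≤ x → x ≤ pathMat w n 0 0 + pathMat w n 0 1 + pathMat w n 1 0
      + pathMat w n 1 1 → |x| ≤ (n + 1) * (pathMat w n).trace := fun x hx hle => by
    rw [abs_of_nonneg hx]; nlinarith
  have := hnn 0 0; have := hnn 0 1; have := hnn 1 0; have := hnn 1 1
  refine max_le (abs_Qval_le ?_ ?_) (max_le (abs_Qval_le ?_ ?_) (abs_Qval_le ?_ ?_)) <;>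
    exact hbound _ (by linarith) (by linarith)

end Form

section LowerBound

variable {a h b : ℤ} {w : ℕ → Matrix (Fin 2) (Fin 2) ℤ}

lemma vecMul_pathMat_ne_zero (hw : ∀ n, w n = Lm ∨ w n = Rm) {ℓ : Fin 2 → ℤ} (hℓ : ℓ ≠ 0)
    (n : ℕ) : ℓ ᵥ* pathMat w n ≠ 0 := by
  have hunit : IsUnit (pathMat w n) := by
    rw [isUnit_iff_isUnit_det, det_pathMat_of_LR hw n]; exact isUnit_one
  exact fun h0 => hℓ (vecMul_injective_of_isUnit hunit (h0.trans (zero_vecMul _).symm))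

lemma one_vecMul_apply {R : Type*} [NonAssocSemiring R] (A : Matrix (Fin 2) (Fin 2) R)
    (j : Fin 2) :
    (1 ᵥ* A) j = A 0 j + A 1 j := by
  simp [vecMul, dotProduct, Fin.sum_univ_two]

lemma colSum_le_mul_abs (hw : ∀ n, w n = Lm ∨ w n = Rm) {ℓ : Fin 2 → ℤ} {N : ℕ}
    (hpos : 0 < (ℓ ᵥ* pathMat w N) 0 * (ℓ ᵥ* pathMat w N) 1) {n : ℕ} (hn : N ≤ n) (j : Fin 2) :
    (1 ᵥ* pathMat w n) j ≤
      ((1 ᵥ* pathMat w N) 0 + (1 ᵥ* pathMat w N) 1) * |(ℓ ᵥ* pathMat w n) j| := by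
  refine orbit_le_mul_abs (u := fun n => ℓ ᵥ* pathMat w n) (v := fun n => 1 ᵥ* pathMat w n) hw
    (vecMul_pathMat_succ w ℓ) (vecMul_pathMat_succ w 1) hpos (fun j => ?_) hn j
  have hne : (ℓ ᵥ* pathMat w N) j ≠ 0 := by
    fin_cases j
    · exact left_ne_zero_of_mul hpos.ne'
    · exact right_ne_zero_of_mul hpos.ne'
  have hnn := pathMat_nonneg_of_LR hw N
  have h0 := one_vecMul_apply (pathMat w N) 0
  have h1 := one_vecMul_apply (pathMat w N) 1
  have hle : (1 ᵥ* pathMat w N) j ≤ (1 ᵥ* pathMat w N) 0 + (1 ᵥ* pathMat w N) 1 := by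
    fin_cases j <;> simp only [Fin.zero_eta, Fin.mk_one] <;>
      linarith [hnn 0 0, hnn 0 1, hnn 1 0, hnn 1 1]
  nlinarith [Int.one_le_abs hne, hnn 0 0, hnn 0 1, hnn 1 0, hnn 1 1]

lemma trace_le_colSum (hw : ∀ n, w n = Lm ∨ w n = Rm) (n : ℕ) :
    (pathMat w n).trace ≤ (1 ᵥ* pathMat w n) 0 + (1 ᵥ* pathMat w n) 1 := by
  have hnn := pathMat_nonneg_of_LR hw n
  rw [trace_fin_two, one_vecMul_apply, one_vecMul_apply]
  linarith [hnn 0 1, hnn 1 0]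

lemma trace_sq_le_Qnorm_of_mul_pos (hw : ∀ n, w n = Lm ∨ w n = Rm) {m : ℤ}
    {ℓ₁ ℓ₂ : Fin 2 → ℤ} (hfac : ∀ v, m * Qval a h b (v 0) (v 1) = (ℓ₁ ⬝ᵥ v) * (ℓ₂ ⬝ᵥ v))
    {N : ℕ} (h₁ : 0 < (ℓ₁ ᵥ* pathMat w N) 0 * (ℓ₁ ᵥ* pathMat w N) 1)
    (h₂ : 0 < (ℓ₂ ᵥ* pathMat w N) 0 * (ℓ₂ ᵥ* pathMat w N) 1) :
    ∃ c : ℤ, ∀ n ≥ N, (pathMat w n).trace ^ 2 ≤ c * Qnorm a h b w n := by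
  set K := (1 ᵥ* pathMat w N) 0 + (1 ᵥ* pathMat w N) 1
  refine ⟨4 * K ^ 2 * |m|, fun n hn => ?_⟩
  have hcol : ∀ j, (1 ᵥ* pathMat w n) j ^ 2 ≤ K ^ 2 * |m| * Qnorm a h b w n := fun j => by
    have hS : 0 ≤ (1 ᵥ* pathMat w n) j := by
      rw [one_vecMul_apply]
      linarith [pathMat_nonneg_of_LR hw n 0 j, pathMat_nonneg_of_LR hw n 1 j]
    calc (1 ᵥ* pathMat w n) j ^ 2
        ≤ (K * |(ℓ₁ ᵥ* pathMat w n) j|) * (K * |(ℓ₂ ᵥ* pathMat w n) j|) := by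
          rw [sq]
          exact mul_le_mul (colSum_le_mul_abs hw h₁ hn j) (colSum_le_mul_abs hw h₂ hn j) hS
            (hS.trans (colSum_le_mul_abs hw h₁ hn j))
      _ = K ^ 2 * |m| * |Qval a h b (pathMat w n 0 j) (pathMat w n 1 j)| := by
          have hval : (ℓ₁ ᵥ* pathMat w n) j * (ℓ₂ ᵥ* pathMat w n) j =
              m * Qval a h b (pathMat w n 0 j) (pathMat w n 1 j) :=
            (hfac fun i => pathMat w n i j).symm
          rw [mul_mul_mul_comm, ← abs_mul, hval, abs_mul]
          ring
      _ ≤ K ^ 2 * |m| * Qnorm a h b w n := by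
          gcongr
          exact abs_Qval_col_le_Qnorm w n j
  calc (pathMat w n).trace ^ 2 ≤ ((1 ᵥ* pathMat w n) 0 + (1 ᵥ* pathMat w n) 1) ^ 2 :=
        pow_le_pow_left₀ (by linarith [two_le_trace_pathMat hw n]) (trace_le_colSum hw n) 2
    _ ≤ 2 * ((1 ᵥ* pathMat w n) 0 ^ 2 + (1 ᵥ* pathMat w n) 1 ^ 2) := by
        nlinarith [sq_nonneg ((1 ᵥ* pathMat w n) 0 - (1 ᵥ* pathMat w n) 1)]
    _ ≤ 4 * K ^ 2 * |m| * Qnorm a h b w n := by linarith [hcol 0, hcol 1]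

lemma trace_le_of_const (hw : ∀ n, w n = Lm ∨ w n = Rm) {n₁ : ℕ} (hconst : ∀ n ≥ n₁, w n = w n₁)
    {n : ℕ} (hn : n₁ ≤ n) :
    (pathMat w n).trace ≤ (n + 1) * ((1 ᵥ* pathMat w n₁) 0 + (1 ᵥ* pathMat w n₁) 1) := by
  obtain ⟨k, rfl⟩ := Nat.exists_eq_add_of_le hn
  have hnn := pathMat_nonneg_of_LR hw n₁
  have h0 : 0 ≤ (1 ᵥ* pathMat w n₁) 0 := by rw [one_vecMul_apply]; linarith [hnn 0 0, hnn 1 0]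
  have h1 : 0 ≤ (1 ᵥ* pathMat w n₁) 1 := by rw [one_vecMul_apply]; linarith [hnn 0 1, hnn 1 1]
  have hsum := orbit_sum_le_of_const (u := fun n => 1 ᵥ* pathMat w n) hw
    (vecMul_pathMat_succ w 1) hconst h0 h1 k
  have hk : (k : ℤ) + 1 ≤ ((n₁ + k : ℕ) : ℤ) + 1 := by push_cast; linarith [n₁.cast_nonneg (α := ℤ)]
  nlinarith [trace_le_colSum hw (n₁ + k)]

lemma exists_trace_sq_le_Qnorm (hD : 0 < h ^ 2 - 4 * a * b)
    (hsq : IsSquare (h ^ 2 - 4 * a * b)) (hw : ∀ n, w n = Lm ∨ w n = Rm) :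
    ∃ (c : ℤ) (k : ℕ), ∀ᶠ n in atTop,
      (pathMat w n).trace ^ 2 ≤ c * (n + 1) ^ k * Qnorm a h b w n := by
  obtain ⟨m, ℓ₁, ℓ₂, hℓ₁, hℓ₂, hfac⟩ := exists_mul_Qval_eq_mul hD hsq
  by_cases hgrowth : (∃ N, 0 < (ℓ₁ ᵥ* pathMat w N) 0 * (ℓ₁ ᵥ* pathMat w N) 1) ∧
      ∃ N, 0 < (ℓ₂ ᵥ* pathMat w N) 0 * (ℓ₂ ᵥ* pathMat w N) 1
  · obtain ⟨⟨N₁, h₁⟩, N₂, h₂⟩ := hgrowth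
    obtain ⟨c, hc⟩ := trace_sq_le_Qnorm_of_mul_pos hw hfac
      (orbit_mul_pos (u := fun n => ℓ₁ ᵥ* pathMat w n) hw (vecMul_pathMat_succ w ℓ₁) h₁
        (le_max_left N₁ N₂))
      (orbit_mul_pos (u := fun n => ℓ₂ ᵥ* pathMat w n) hw (vecMul_pathMat_succ w ℓ₂) h₂
        (le_max_right N₁ N₂))
    exact ⟨c, 0, eventually_atTop.2 ⟨_, fun n hn => by simpa using hc n hn⟩⟩
  · obtain ⟨n₁, hconst⟩ : ∃ n₁, ∀ n ≥ n₁, w n = w n₁ := by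
      rw [not_and_or, not_exists, not_exists] at hgrowth
      rcases hgrowth with hnp | hnp
      · exact eventually_const_of_orbit_mul_nonpos (u := fun n => ℓ₁ ᵥ* pathMat w n) hw
          (vecMul_pathMat_succ w ℓ₁) (fun n => not_lt.1 (hnp n)) (vecMul_pathMat_ne_zero hw hℓ₁)
      · exact eventually_const_of_orbit_mul_nonpos (u := fun n => ℓ₂ ᵥ* pathMat w n) hw
          (vecMul_pathMat_succ w ℓ₂) (fun n => not_lt.1 (hnp n)) (vecMul_pathMat_ne_zero hw hℓ₂)
    set K := (1 ᵥ* pathMat w n₁) 0 + (1 ᵥ* pathMat w n₁) 1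
    refine ⟨K ^ 2, 2, eventually_atTop.2 ⟨n₁, fun n hn => ?_⟩⟩
    calc (pathMat w n).trace ^ 2 ≤ ((n + 1) * K) ^ 2 :=
          pow_le_pow_left₀ (by linarith [two_le_trace_pathMat hw n])
            (trace_le_of_const hw hconst hn) 2
      _ = K ^ 2 * (n + 1) ^ 2 * 1 := by ring
      _ ≤ K ^ 2 * (n + 1) ^ 2 * Qnorm a h b w n := by
          gcongr
          exact one_le_Qnorm hD.ne' hw n

end LowerBound

section Lyapunov

variable {a h b : ℤ} {w : ℕ → Matrix (Fin 2) (Fin 2) ℤ}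

lemma two_le_trace_pathMat_real (hw : ∀ n, w n = Lm ∨ w n = Rm) (n : ℕ) :
    (2 : ℝ) ≤ (pathMat w n).trace := by
  exact_mod_cast two_le_trace_pathMat hw n

lemma trace_pathMat_le_four_pow (hw : ∀ n, w n = Lm ∨ w n = Rm) {n : ℕ} (hn : 1 ≤ n) :
    ((pathMat w n).trace : ℝ) ≤ 4 ^ n := by
  have h2 : (2 : ℤ) ≤ 2 ^ n := by simpa using pow_le_pow_right₀ one_le_two hn
  have : (pathMat w n).trace ≤ 4 ^ n := calc
    (pathMat w n).trace ≤ 2 ^ (n + 1) := trace_pathMat_le_two_pow hw n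
    _ = 2 * 2 ^ n := by ring
    _ ≤ 2 ^ n * 2 ^ n := by nlinarith
    _ = 4 ^ n := by rw [← mul_pow]; norm_num
  exact_mod_cast this

lemma spectralRadius_pathMat_mem_Icc (hw : ∀ n, w n = Lm ∨ w n = Rm) (n : ℕ) :
    (spectralRadius ℂ ((pathMat w n).map ((↑) : ℤ → ℂ))).toReal ∈
      Set.Icc (((pathMat w n).trace : ℝ) / 2) (pathMat w n).trace := by
  refine spectralRadius_toReal_mem_Icc (two_le_trace_pathMat_real hw n) ?_ ?_
  · simp [trace_fin_two]
  · have := (Int.castRingHom ℂ).map_det (pathMat w n)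
    rw [det_pathMat_of_LR hw n, map_one] at this
    exact this.symm

lemma Lyap_eq_growthRate_trace (hw : ∀ n, w n = Lm ∨ w n = Rm) :
    Lyap w = growthRate fun n => ((pathMat w n).trace : ℝ) := by
  have hρ := spectralRadius_pathMat_mem_Icc hw
  have ht := two_le_trace_pathMat_real hw
  refine growthRate_eq_of_tendsto (B := 4) (.of_forall fun n => by linarith [ht n])
    ((eventually_ge_atTop 1).mono fun n => trace_pathMat_le_four_pow hw) ?_
  refine tendsto_log_div_sub_log_div (C₁ := 1) (k₁ := 0) (C₂ := 2) (k₂ := 0)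
    (.of_forall fun n => ?_) (.of_forall fun n => ?_) (.of_forall fun n => ?_)
    (.of_forall fun n => ?_)
  · linarith [(hρ n).1, ht n]
  · linarith [ht n]
  · simpa using (hρ n).2
  · simpa using (div_le_iff₀' two_pos).1 (hρ n).1

lemma LyapQ_eq_growthRate_trace_sq (hD : 0 < h ^ 2 - 4 * a * b)
    (hsq : IsSquare (h ^ 2 - 4 * a * b)) (hw : ∀ n, w n = Lm ∨ w n = Rm) :
    LyapQ a h b w = growthRate fun n => ((pathMat w n).trace : ℝ) ^ 2 := by
  obtain ⟨c, k, hlow⟩ := exists_trace_sq_le_Qnorm hD hsq hw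
  have ht := two_le_trace_pathMat_real hw
  refine growthRate_eq_of_tendsto (B := 16) (.of_forall fun n => by nlinarith [ht n])
    ((eventually_ge_atTop 1).mono fun n hn => ?_) ?_
  · calc ((pathMat w n).trace : ℝ) ^ 2 ≤ (4 ^ n) ^ 2 :=
          pow_le_pow_left₀ (by linarith [ht n]) (trace_pathMat_le_four_pow hw hn) 2
      _ = 16 ^ n := by rw [← pow_mul, mul_comm, pow_mul]; norm_num
  refine tendsto_log_div_sub_log_div (C₁ := |a| + |h| + |b|) (k₁ := 2) (C₂ := c) (k₂ := k)
    (.of_forall fun n => ?_) (.of_forall fun n => by nlinarith [ht n])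
    (.of_forall fun n => ?_) (hlow.mono fun n hn => by exact_mod_cast hn)
  · exact_mod_cast one_le_Qnorm hD.ne' hw n
  · have := Qnorm_le (a := a) (h := h) (b := b) hw n
    calc (Qnorm a h b w n : ℝ)
        ≤ (((|a| + |h| + |b|) * ((n + 1) * (pathMat w n).trace) ^ 2 : ℤ) : ℝ) := by
          exact_mod_cast this
      _ = _ := by push_cast; ring

end Lyapunov

/-- For an indefinite integer binary quadratic form representing zero
(discriminant a positive perfect square), `Λ_Q(w) = 2 Λ(w)` for every path `w`. -/
theorem lyapunov_indefinite_representing_zero (a h b : ℤ)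
    (hD : 0 < h ^ 2 - 4 * a * b) (hsq : IsSquare (h ^ 2 - 4 * a * b))
    (w : ℕ → Matrix (Fin 2) (Fin 2) ℤ) (hw : ∀ n, w n = Lm ∨ w n = Rm) :
    LyapQ a h b w = 2 * Lyap w := by
  rw [LyapQ_eq_growthRate_trace_sq hD hsq hw, Lyap_eq_growthRate_trace hw,
    growthRate_pow (B := 4) (.of_forall fun n => by linarith [two_le_trace_pathMat_real hw n])
      ((eventually_ge_atTop 1).mono fun n => trace_pathMat_le_four_pow hw) 2]
  norm_num
end
end

section
/- (Galois) A quadratic irrational α has a purely periodic continued fraction expansion (i.e. its sequence of partial quotients c₀, c₁, c₂, … satisfies c_{i+l} = c_i for all i ≥ 0 for some period l ≥ 1) if and only if α > 1 and its conjugate ᾱ satisfies −1 < ᾱ < 0. -/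
/-!
If the partial quotients of `α` have period `l`, then the complete quotient `ξ_l` equals `α`,
since an irrational number is determined by its partial quotients. Hence
`α = (p α + p') / (q α + q')`, where `p / q` and `p' / q'` are two consecutive convergents, so
`α` and `α'` are the roots of `q X² + (q' - p) X - p'`. This polynomial is negative at `0` and
positive at `-1`, which traps `α'` in `(-1, 0)`.

Conversely, if `α > 1` and `-1 < α' < 0`, then every complete quotient `ξ_n` and its conjugate
`ξ_n'` satisfy the same inequalities, and `(ξ_n, ξ_n')` is the pair of roots of an integer
quadratic of the same discriminant as that of `α`. These inequalities bound the coefficients of the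
quadratic, so the pairs range over a finite set; and a pair is recovered from its successor
because `⌊ξ_n⌋ = ⌊-1 / ξ_{n+1}'⌋`. An injective map of a finite set permutes it, so the orbit of
`(α, α')` is purely periodic.
-/

open Filter

noncomputable section

/-- The Gauss map iterates of `α`. -/
def cfXi (α : ℝ) : ℕ → ℝ
  | 0 => α
  | n + 1 => 1 / Int.fract (cfXi α n)

/-- The `n`-th partial quotient of `α`. -/
def cfA (α : ℝ) (n : ℕ) : ℤ := ⌊cfXi α n⌋

variable {x y : ℝ}

theorem cfXi_add (x : ℝ) (m n : ℕ) : cfXi x (m + n) = cfXi (cfXi x n) m := by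
  induction m with
  | zero => simp [cfXi]
  | succ m ih => rw [Nat.add_right_comm, cfXi, ih, cfXi]

theorem Irrational.cfXi (hx : Irrational x) : ∀ n, Irrational (cfXi x n)
  | 0 => hx
  | n + 1 => by
    rw [_root_.cfXi, one_div, Int.fract]
    exact ((hx.cfXi n).sub_intCast _).inv

theorem one_lt_cfXi_succ (hx : Irrational x) (n : ℕ) : 1 < cfXi x (n + 1) :=
  one_lt_one_div (Int.fract_pos.2 ((hx.cfXi n).ne_int _)) (Int.fract_lt_one _)

theorem one_le_cfA_succ (hx : Irrational x) (n : ℕ) : 1 ≤ cfA x (n + 1) :=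
  Int.le_floor.2 (by exact_mod_cast (one_lt_cfXi_succ hx n).le)

theorem cfXi_eq_cfA_add (x : ℝ) (n : ℕ) : cfXi x n = cfA x n + 1 / cfXi x (n + 1) := by
  rw [cfXi, one_div_one_div, cfA, Int.floor_add_fract]

theorem GenContFract.of_s_get?_eq_cfA (hx : Irrational x) (n : ℕ) :
    (GenContFract.of x).s.get? n = some ⟨1, cfA x (n + 1)⟩ := by
  induction n generalizing x with
  | zero =>
    rw [← Stream'.Seq.head, GenContFract.of_s_head (Int.fract_pos.2 (hx.ne_int _)).ne', cfA,
      cfXi, cfXi, one_div]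
  | succ n ih =>
    have h1 : (Int.fract x)⁻¹ = cfXi x 1 := (one_div _).symm
    rw [GenContFract.of_s_succ, h1, ih (hx.cfXi 1), cfA, cfA, cfXi_add x (n + 1) 1]

theorem eq_of_cfA_eq (hx : Irrational x) (hy : Irrational y) (h : ∀ n, cfA x n = cfA y n) :
    x = y := by
  have hof : GenContFract.of x = GenContFract.of y := by
    have hs : (GenContFract.of x).s = (GenContFract.of y).s := Stream'.Seq.ext fun n => by
      rw [GenContFract.of_s_get?_eq_cfA hx, GenContFract.of_s_get?_eq_cfA hy, h]
    have hh : (GenContFract.of x).h = (GenContFract.of y).h := by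
      simp only [GenContFract.of_h_eq_floor]
      exact_mod_cast h 0
    exact GenContFract.ext hh hs
  exact tendsto_nhds_unique (GenContFract.of_convergence x) (hof ▸ GenContFract.of_convergence y)

theorem cfA_periodic_iff (hx : Irrational x) {l : ℕ} :
    (∀ i, cfA x (i + l) = cfA x i) ↔ cfXi x l = x := by
  constructor
  · intro h
    exact eq_of_cfA_eq (hx.cfXi l) hx fun i => by rw [cfA, ← cfXi_add, ← cfA, h]
  · intro h i
    rw [cfA, cfXi_add, h, cfA]

theorem one_lt_of_cfA_eq_cfA_zero (hx : Irrational x) {l : ℕ} (hl : 1 ≤ l)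
    (h : cfA x l = cfA x 0) : 1 < x := by
  obtain ⟨k, rfl⟩ : ∃ k, l = k + 1 := ⟨l - 1, by omega⟩
  have h1 : (1 : ℝ) ≤ x := by exact_mod_cast Int.le_floor.1 (h ▸ one_le_cfA_succ hx k)
  exact h1.lt_of_ne hx.ne_one.symm

theorem Irrational.eq_zero_of_intCast_mul_add_eq_zero (hx : Irrational x) {m n : ℤ}
    (h : (m : ℝ) * x + n = 0) : m = 0 ∧ n = 0 := by
  obtain rfl : m = 0 := by
    by_contra hm
    exact ((hx.intCast_mul hm).add_intCast n).ne_zero h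
  exact ⟨rfl, by simpa using h⟩

section Quadratic

variable {a h b x y : ℝ}

theorem vieta_of_quadratic_eq_zero (hx : a * x ^ 2 + h * x + b = 0)
    (hy : a * y ^ 2 + h * y + b = 0) (hxy : x ≠ y) : h = -a * (x + y) ∧ b = a * x * y := by
  have hsum : h = -a * (x + y) := by
    have : (x - y) * (a * (x + y) + h) = 0 := by linear_combination hx - hy
    linarith [(mul_eq_zero.1 this).resolve_left (sub_ne_zero.2 hxy)]
  exact ⟨hsum, by linear_combination hx - x * hsum⟩

theorem quadratic_eq_mul_sub_mul_sub (hx : a * x ^ 2 + h * x + b = 0)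
    (hy : a * y ^ 2 + h * y + b = 0) (hxy : x ≠ y) (z : ℝ) :
    a * z ^ 2 + h * z + b = a * (z - x) * (z - y) := by
  obtain ⟨rfl, rfl⟩ := vieta_of_quadratic_eq_zero hx hy hxy
  ring

theorem eq_or_eq_of_quadratic_eq_zero (ha : a ≠ 0) (hx : a * x ^ 2 + h * x + b = 0)
    (hy : a * y ^ 2 + h * y + b = 0) (hxy : x ≠ y) {z : ℝ} (hz : a * z ^ 2 + h * z + b = 0) :
    z = x ∨ z = y := by
  rw [quadratic_eq_mul_sub_mul_sub hx hy hxy, mul_assoc, mul_eq_zero, mul_eq_zero,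
    sub_eq_zero, sub_eq_zero] at hz
  exact hz.resolve_left ha

theorem subsingleton_quadratic_root_pairs (ha : a ≠ 0) :
    {p : ℝ × ℝ | p.2 < p.1 ∧ a * p.1 ^ 2 + h * p.1 + b = 0 ∧
      a * p.2 ^ 2 + h * p.2 + b = 0}.Subsingleton := by
  rintro p ⟨hp, hp1, hp2⟩ q ⟨hq, hq1, hq2⟩
  rcases eq_or_eq_of_quadratic_eq_zero ha hp1 hp2 hp.ne' hq1 with h1 | h1 <;>
  rcases eq_or_eq_of_quadratic_eq_zero ha hp1 hp2 hp.ne' hq2 with h2 | h2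
  · linarith
  · exact Prod.ext h1.symm h2.symm
  · linarith
  · linarith

theorem quadratic_one_div_sub_eq_zero (hx : a * x ^ 2 + h * x + b = 0) {c : ℝ} (hxc : x ≠ c) :
    (a * c ^ 2 + h * c + b) * (1 / (x - c)) ^ 2 + (2 * a * c + h) * (1 / (x - c)) + a = 0 := by
  have : x - c ≠ 0 := sub_ne_zero.2 hxc
  field_simp
  linear_combination hx

theorem sq_le_discrim_of_reduced (hx : a * x ^ 2 + h * x + b = 0)
    (hy : a * y ^ 2 + h * y + b = 0) (hx1 : 1 < x) (hy1 : -1 < y) (hy0 : y < 0) :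
    a ^ 2 ≤ discrim a h b ∧ h ^ 2 ≤ discrim a h b ∧ b ^ 2 ≤ discrim a h b := by
  obtain ⟨rfl, rfl⟩ := vieta_of_quadratic_eq_zero hx hy (by linarith)
  have hD : discrim a (-a * (x + y)) (a * x * y) = a ^ 2 * (x - y) ^ 2 := by
    rw [discrim]; ring
  rw [hD]
  refine ⟨le_mul_of_one_le_right (sq_nonneg a) (by nlinarith), ?_, ?_⟩
  · calc (-a * (x + y)) ^ 2 = a ^ 2 * (x + y) ^ 2 := by ring
      _ ≤ a ^ 2 * (x - y) ^ 2 := by gcongr a ^ 2 * ?_; nlinarith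
  · calc (a * x * y) ^ 2 = a ^ 2 * (x * y) ^ 2 := by ring
      _ ≤ a ^ 2 * (x - y) ^ 2 := by
        have hxy : 0 ≤ -(x * y) := by nlinarith
        have hxy' : -(x * y) ≤ x - y := by nlinarith
        rw [← neg_sq (x * y)]
        gcongr

end Quadratic

theorem Irrational.quadratic_eq_zero_of_conj (hx : Irrational x) {a h b A H B : ℤ} (ha : a ≠ 0)
    (hx0 : (a : ℝ) * x ^ 2 + h * x + b = 0) (hy0 : (a : ℝ) * y ^ 2 + h * y + b = 0)
    (hX : (A : ℝ) * x ^ 2 + H * x + B = 0) : (A : ℝ) * y ^ 2 + H * y + B = 0 := by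
  obtain ⟨hH, hB⟩ := hx.eq_zero_of_intCast_mul_add_eq_zero (m := a * H - A * h)
    (n := a * B - A * b) (by push_cast; linear_combination (a : ℝ) * hX - (A : ℝ) * hx0)
  have hH' : (a : ℝ) * H = A * h := by exact_mod_cast sub_eq_zero.1 hH
  have hB' : (a : ℝ) * B = A * b := by exact_mod_cast sub_eq_zero.1 hB
  have : (a : ℝ) * (A * y ^ 2 + H * y + B) = 0 := by
    linear_combination (A : ℝ) * hy0 + y * hH' + hB'
  exact (mul_eq_zero.1 this).resolve_left (Int.cast_ne_zero.2 ha)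

/-- `p / q` and `p' / q'` are the `n`-th and `(n - 1)`-st convergents of `x`. -/
theorem exists_convergent_relation (hx : Irrational x) (h1 : 1 < x) (n : ℕ) :
    ∃ p q p' q' : ℤ, x * (q * cfXi x (n + 1) + q') = p * cfXi x (n + 1) + p' ∧
      0 < p' ∧ p' ≤ p ∧ 0 ≤ q' ∧ q' ≤ q ∧ 0 < q ∧ 0 < p - p' + (q - q') := by
  induction n with
  | zero =>
    have ha : 1 ≤ cfA x 0 := Int.le_floor.2 (by exact_mod_cast h1.le)
    refine ⟨cfA x 0, 1, 1, 0, ?_, one_pos, ha, le_rfl, zero_le_one, one_pos, by omega⟩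
    have hξ := cfXi_eq_cfA_add x 0
    have hpos : cfXi x 1 ≠ 0 := (zero_lt_one.trans (one_lt_cfXi_succ hx 0)).ne'
    rw [cfXi] at hξ
    push_cast
    field_simp at hξ ⊢
    linear_combination hξ
  | succ n ih =>
    obtain ⟨p, q, p', q', hrel, hp', hpp, hq', hqq, hq, hsum⟩ := ih
    set c := cfA x (n + 1)
    have hc : 1 ≤ c := one_le_cfA_succ hx n
    have hξ := cfXi_eq_cfA_add x (n + 1)
    have hpos : cfXi x (n + 2) ≠ 0 := (zero_lt_one.trans (one_lt_cfXi_succ hx (n + 1))).ne'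
    refine ⟨c * p + p', c * q + q', p, q, ?_, by omega, by nlinarith, by omega, by nlinarith,
      by nlinarith, by nlinarith⟩
    rw [hξ] at hrel
    push_cast
    field_simp at hrel
    linear_combination hrel

theorem conj_mem_Ioo_of_cfXi_eq {a h b : ℤ} (ha : a ≠ 0) (hx : Irrational x) (h1 : 1 < x)
    (hx0 : (a : ℝ) * x ^ 2 + h * x + b = 0) (hy0 : (a : ℝ) * y ^ 2 + h * y + b = 0)
    (hxy : y ≠ x) {l : ℕ} (hl : 1 ≤ l) (hfix : cfXi x l = x) : -1 < y ∧ y < 0 := by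
  obtain ⟨k, rfl⟩ : ∃ k, l = k + 1 := ⟨l - 1, by omega⟩
  obtain ⟨p, q, p', q', hrel, hp', -, -, -, hq, hsum⟩ := exists_convergent_relation hx h1 k
  rw [hfix] at hrel
  have hf : (q : ℝ) * x ^ 2 + ((q' - p : ℤ) : ℝ) * x + ((-p' : ℤ) : ℝ) = 0 := by
    push_cast; linear_combination hrel
  have hfac := quadratic_eq_mul_sub_mul_sub hf (hx.quadratic_eq_zero_of_conj ha hx0 hy0 hf)
    hxy.symm
  push_cast at hfac
  have hq' : (0 : ℝ) < q := by exact_mod_cast hq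
  have hp'' : (0 : ℝ) < p' := by exact_mod_cast hp'
  have hsum' : (0 : ℝ) < p - p' + (q - q') := by exact_mod_cast hsum
  have h0 : (q * x) * y = -p' := by linear_combination -(hfac 0)
  have hm1 : (q * (1 + x)) * (1 + y) = p - p' + (q - q') := by linear_combination -(hfac (-1))
  exact ⟨by linarith [pos_of_mul_pos_right (hm1 ▸ hsum') (by positivity)],
    neg_of_mul_neg_right (h0 ▸ neg_neg_of_pos hp'') (by positivity)⟩

theorem Set.InjOn.mem_periodicPts {α : Type*} {f : α → α} {s : Set α} (hinj : Set.InjOn f s)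
    (hmaps : Set.MapsTo f s s) (hs : s.Finite) {x : α} (hx : x ∈ s) :
    x ∈ Function.periodicPts f := by
  obtain ⟨m, n, hmn, heq⟩ :=
    hs.exists_lt_map_eq_of_forall_mem (f := fun k => f^[k] x) fun k => hmaps.iterate k hx
  refine Function.mk_mem_periodicPts (n := n - m) (by omega) ?_
  refine hinj.iterate hmaps m (hmaps.iterate _ hx) hx ?_
  rw [← Function.iterate_add_apply, Nat.add_sub_cancel' hmn.le]
  exact heq.symm

/-- On `(ξ, ξ')` with `ξ'` the conjugate of `ξ`, the continued fraction step `ξ ↦ 1 / (ξ - ⌊ξ⌋)`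
applied to both (so the second component is again the conjugate of the first). -/
def cfStep (p : ℝ × ℝ) : ℝ × ℝ := (1 / Int.fract p.1, 1 / (p.2 - ⌊p.1⌋))

def reducedPairs : Set (ℝ × ℝ) := {p | Irrational p.1 ∧ 1 < p.1 ∧ p.2 ∈ Set.Ioo (-1) 0}

def quadraticRootPairs (D : ℤ) : Set (ℝ × ℝ) :=
  {p | ∃ a h b : ℤ, a ≠ 0 ∧ discrim a h b = D ∧
    (a : ℝ) * p.1 ^ 2 + h * p.1 + b = 0 ∧ (a : ℝ) * p.2 ^ 2 + h * p.2 + b = 0}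

theorem cfStep_iterate_fst (p : ℝ × ℝ) (n : ℕ) : (cfStep^[n] p).1 = cfXi p.1 n := by
  induction n with
  | zero => rfl
  | succ n ih => rw [Function.iterate_succ_apply', cfStep, ih, cfXi]

theorem one_le_floor_of_mem_reducedPairs {p : ℝ × ℝ} (hp : p ∈ reducedPairs) :
    (1 : ℝ) ≤ ⌊p.1⌋ := by
  exact_mod_cast Int.le_floor.2 (by exact_mod_cast hp.2.1.le)

theorem mapsTo_cfStep_reducedPairs : Set.MapsTo cfStep reducedPairs reducedPairs := by
  intro p hp
  have hc := one_le_floor_of_mem_reducedPairs hp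
  obtain ⟨hirr, -, hy1, hy0⟩ := hp
  have hneg : p.2 - ⌊p.1⌋ < -1 := by linarith
  refine ⟨hirr.cfXi 1, one_lt_cfXi_succ hirr 0, ?_, one_div_neg.2 (by linarith)⟩
  rw [cfStep, lt_one_div_of_neg (by norm_num) (by linarith)]
  linarith

theorem floor_neg_one_div_cfStep_snd {p : ℝ × ℝ} (hp : p ∈ reducedPairs) :
    ⌊-1 / (cfStep p).2⌋ = ⌊p.1⌋ := by
  obtain ⟨-, -, hy1, hy0⟩ := hp
  rw [cfStep, div_div_eq_mul_div, div_one, neg_one_mul, neg_sub, sub_eq_add_neg,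
    Int.floor_intCast_add, (Int.floor_eq_zero_iff (a := -p.2)).2 ⟨by linarith, by linarith⟩,
    add_zero]

theorem injOn_cfStep_reducedPairs : Set.InjOn cfStep reducedPairs := by
  intro p hp q hq hpq
  have hc : ⌊p.1⌋ = ⌊q.1⌋ := by
    rw [← floor_neg_one_div_cfStep_snd hp, hpq, floor_neg_one_div_cfStep_snd hq]
  obtain ⟨h1, h2⟩ := Prod.ext_iff.1 hpq
  simp only [cfStep, one_div, inv_inj, hc, sub_left_inj] at h1 h2
  exact Prod.ext (by rw [← Int.floor_add_fract p.1, hc, h1, Int.floor_add_fract]) h2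

theorem mapsTo_cfStep_quadraticRootPairs (D : ℤ) :
    Set.MapsTo cfStep (reducedPairs ∩ quadraticRootPairs D) (quadraticRootPairs D) := by
  rintro p ⟨hp, a, h, b, ha, hD, hx, hy⟩
  set c := ⌊p.1⌋
  have hxc : p.1 ≠ c := hp.1.ne_int c
  have hyc : p.2 ≠ c := by linarith [one_le_floor_of_mem_reducedPairs hp, hp.2.2.2]
  have hxy : p.1 ≠ p.2 := by linarith [hp.2.1, hp.2.2.2]
  refine ⟨a * c ^ 2 + h * c + b, 2 * a * c + h, a, ?_, ?_, ?_, ?_⟩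
  · have hlead := quadratic_eq_mul_sub_mul_sub hx hy hxy c
    rify
    rw [hlead]
    exact mul_ne_zero (mul_ne_zero (by exact_mod_cast ha) (sub_ne_zero.2 hxc.symm))
      (sub_ne_zero.2 hyc.symm)
  · rw [← hD, discrim, discrim]; ring
  · push_cast
    exact quadratic_one_div_sub_eq_zero hx hxc
  · push_cast
    exact quadratic_one_div_sub_eq_zero hy hyc

theorem mem_Icc_of_sq_le {z D : ℤ} (h : z ^ 2 ≤ D) : z ∈ Set.Icc (-D) D := by
  constructor <;> nlinarith [Int.le_self_sq z, Int.le_self_sq (-z)]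

theorem finite_reducedPairs_inter_quadraticRootPairs (D : ℤ) :
    (reducedPairs ∩ quadraticRootPairs D).Finite := by
  let box : Set (ℤ × ℤ × ℤ) :=
    {t | t.1 ≠ 0} ∩ Set.Icc (-D) D ×ˢ Set.Icc (-D) D ×ˢ Set.Icc (-D) D
  have hbox : box.Finite :=
    ((Set.finite_Icc _ _).prod ((Set.finite_Icc _ _).prod (Set.finite_Icc _ _))).inter_of_right _
  refine (hbox.biUnion fun t ht => (subsingleton_quadratic_root_pairs
    (a := t.1) (h := t.2.1) (b := t.2.2) ?_).finite).subset ?_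
  · exact_mod_cast ht.1
  rintro p ⟨hp, a, h, b, ha, rfl, hx, hy⟩
  obtain ⟨hax, hhx, hbx⟩ := sq_le_discrim_of_reduced hx hy hp.2.1 hp.2.2.1 hp.2.2.2
  have hcast (z : ℤ) (hz : (z : ℝ) ^ 2 ≤ discrim (a : ℝ) h b) : z ^ 2 ≤ discrim a h b := by
    rw [discrim] at hz ⊢
    exact_mod_cast hz
  simp only [Set.mem_iUnion]
  exact ⟨(a, h, b), ⟨ha, mem_Icc_of_sq_le (hcast a hax), mem_Icc_of_sq_le (hcast h hhx),
    mem_Icc_of_sq_le (hcast b hbx)⟩, by linarith [hp.2.1, hp.2.2.2], hx, hy⟩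

theorem exists_cfXi_eq_of_reduced {a h b : ℤ} (ha : a ≠ 0) (hx : Irrational x) (h1 : 1 < x)
    (hy : y ∈ Set.Ioo (-1) 0) (hx0 : (a : ℝ) * x ^ 2 + h * x + b = 0)
    (hy0 : (a : ℝ) * y ^ 2 + h * y + b = 0) : ∃ l, 1 ≤ l ∧ cfXi x l = x := by
  set S := reducedPairs ∩ quadraticRootPairs (discrim a h b)
  have hS : Set.MapsTo cfStep S S := fun p hp =>
    ⟨mapsTo_cfStep_reducedPairs hp.1, mapsTo_cfStep_quadraticRootPairs _ hp⟩
  have hmem : ((x, y) : ℝ × ℝ) ∈ S := ⟨⟨hx, h1, hy⟩, a, h, b, ha, rfl, hx0, hy0⟩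
  obtain ⟨l, hl, hper⟩ := (injOn_cfStep_reducedPairs.mono Set.inter_subset_left).mem_periodicPts
    hS (finite_reducedPairs_inter_quadraticRootPairs _) hmem
  exact ⟨l, hl, by simpa [cfStep_iterate_fst] using congrArg Prod.fst hper.eq⟩

/-- Galois: A quadratic irrational `α` has a purely periodic continued
fraction expansion if and only if `α > 1` and its conjugate `ᾱ` satisfies `-1 < ᾱ < 0`. -/
theorem galois_pure_periodic_iff
    (α α' : ℝ) (qa qh qb : ℤ) (hqa : qa ≠ 0) (hirr : Irrational α)
    (hroot : (qa : ℝ) * α ^ 2 + (qh : ℝ) * α + (qb : ℝ) = 0)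
    (hroot' : (qa : ℝ) * α' ^ 2 + (qh : ℝ) * α' + (qb : ℝ) = 0)
    (hne : α' ≠ α) :
    (∃ l : ℕ, 1 ≤ l ∧ ∀ i : ℕ, cfA α (i + l) = cfA α i) ↔
      (1 < α ∧ -1 < α' ∧ α' < 0) := by
  constructor
  · rintro ⟨l, hl, hper⟩
    have hα : 1 < α := one_lt_of_cfA_eq_cfA_zero hirr hl (by simpa using hper 0)
    have hfix : cfXi α l = α := (cfA_periodic_iff hirr).1 hper
    exact ⟨hα, conj_mem_Ioo_of_cfXi_eq hqa hirr hα hroot hroot' hne hl hfix⟩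
  · rintro ⟨hα, hα'⟩
    obtain ⟨l, hl, hfix⟩ := exists_cfXi_eq_of_reduced hqa hirr hα hα' hroot hroot'
    exact ⟨l, hl, (cfA_periodic_iff hirr).2 hfix⟩

end
end
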